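/- For the wheel graph W_{1,n} with n ≥ 5, the edge metric dimension equals n − 1. -/

import Mathlib

open SimpleGraph

/-- Distance from a vertex `v` to an edge `e = uw`: `min (d v u) (d v w)`. -/
noncomputable def edgeDist {V : Type*} (G : SimpleGraph V) (v : V) (e : Sym2 V) : ℕ :=
  Sym2.lift ⟨fun u w => min (G.dist v u) (G.dist v w), fun u w => by simp [min_comm]⟩ e

/-- `S` is an edge metric generator: every two distinct edges are distinguished
by some vertex of `S`. -/
def IsEdgeMetricGenerator {V : Type*} (G : SimpleGraph V) (S : Set V) : Prop :=
  ∀ e₁ ∈ G.edgeSet, ∀ e₂ ∈ G.edgeSet, e₁ ≠ e₂ →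
    ∃ v ∈ S, edgeDist G v e₁ ≠ edgeDist G v e₂

/-- The edge metric dimension: minimum cardinality of an edge metric generator. -/
noncomputable def edim {V : Type*} (G : SimpleGraph V) : ℕ :=
  sInf {k | ∃ S : Finset V, S.card = k ∧ IsEdgeMetricGenerator G ↑S}

/-- The wheel graph `W₁,ₙ`: a cycle on `n` vertices plus a central vertex
(`none`) adjacent to every cycle vertex. -/
def wheelGraph (n : ℕ) : SimpleGraph (Option (Fin n)) :=
  SimpleGraph.fromRel fun x y =>
    x = none ∨ ∃ i j : Fin n, x = some i ∧ y = some j ∧ (cycleGraph n).Adj i j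

/-! The hub `x` of the wheel is adjacent to every rim vertex, so rim vertices see a spoke at
distance 0 or 1 and a rim edge at distance 0, 1 or 2. Two spokes `x g_i`, `x g_j` are at distance
0 from `x` and 1 from every other rim vertex, hence a generator contains `g_i` or `g_j`: it misses
at most one rim vertex. Conversely, take all rim vertices but one, `o`. A vertex lying in exactly
one of two distinct edges tells them apart; one outside `{x, o}` exists unless the edges are a
spoke `x y` and the rim edge `o y`, and these are told apart (distance 1 versus 2) by a rim vertex
adjacent to neither `o` nor `y`, which exists once `n ≥ 5`. -/

lemma Sym2.exists_eq_mk_of_xor_mem_imp {α : Type*} {x o : α} {e₁ e₂ : Sym2 α}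
    (h₁ : ¬e₁.IsDiag) (h₂ : ¬e₂.IsDiag) (hne : e₁ ≠ e₂)
    (h : ∀ w, Xor (w ∈ e₁) (w ∈ e₂) → w = x ∨ w = o) :
    ∃ y, e₁ = s(x, y) ∧ e₂ = s(o, y) ∨ e₁ = s(o, y) ∧ e₂ = s(x, y) := by
  induction e₁ using Sym2.ind with | _ a b =>
  induction e₂ using Sym2.ind with | _ c d =>
  by_contra hy
  have := h a; have := h b; have := h c; have := h d
  have := not_exists.mp hy a; have := not_exists.mp hy b
  have := not_exists.mp hy c; have := not_exists.mp hy d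
  simp only [Sym2.mk_isDiag_iff, Sym2.mem_iff, ne_eq, Sym2.eq_iff, Xor] at *
  grind

section

variable {V : Type*} {G : SimpleGraph V} {x : V}

lemma edgeDist_mk (w a b : V) : edgeDist G w s(a, b) = min (G.dist w a) (G.dist w b) := rfl

lemma SimpleGraph.Connected.edgeDist_eq_zero_iff (hG : G.Connected) {w : V} {e : Sym2 V} :
    edgeDist G w e = 0 ↔ w ∈ e := by
  induction e using Sym2.ind with
  | _ a b => rw [edgeDist_mk, Nat.min_eq_zero_iff, hG.dist_eq_zero_iff, hG.dist_eq_zero_iff,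
      Sym2.mem_iff]

lemma SimpleGraph.Connected.edgeDist_ne_of_mem_of_notMem (hG : G.Connected) {w : V}
    {e₁ e₂ : Sym2 V} (h₁ : w ∈ e₁) (h₂ : w ∉ e₂) :
    edgeDist G w e₁ ≠ edgeDist G w e₂ := by
  rw [← hG.edgeDist_eq_zero_iff] at h₁ h₂
  omega

lemma SimpleGraph.IsUniversal.dist_eq_two (hx : G.IsUniversal x) {u v : V} (huv : u ≠ v)
    (hadj : ¬G.Adj u v) : G.dist u v = 2 := by
  have hux : x ≠ u := by rintro rfl; exact hadj (hx huv)
  have hvx : x ≠ v := by rintro rfl; exact hadj (hx huv.symm).symm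
  have hle : G.dist u v ≤ 2 := dist_le (.cons (hx hux).symm (hx hvx).toWalk)
  have hlt := (Connected.of_isUniversal hx).one_lt_dist_of_ne_of_not_adj huv hadj
  omega

lemma SimpleGraph.IsUniversal.edgeDist_spoke (hx : G.IsUniversal x) {w v : V}
    (hw : w ∉ s(x, v)) : edgeDist G w s(x, v) = 1 := by
  have hG := Connected.of_isUniversal hx
  rw [Sym2.mem_iff, not_or] at hw
  rw [edgeDist_mk, dist_comm, dist_eq_one_iff_adj.mpr (hx (Ne.symm hw.1))]
  have := hG.pos_dist_of_ne hw.2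
  omega

lemma SimpleGraph.IsUniversal.edgeDist_eq_two (hx : G.IsUniversal x) {w a b : V}
    (hw : w ∉ s(a, b)) (ha : ¬G.Adj w a) (hb : ¬G.Adj w b) : edgeDist G w s(a, b) = 2 := by
  rw [Sym2.mem_iff, not_or] at hw
  rw [edgeDist_mk, hx.dist_eq_two hw.1 ha, hx.dist_eq_two hw.2 hb, min_self]

lemma IsEdgeMetricGenerator.mem_or_mem_of_isUniversal {S : Set V}
    (hS : IsEdgeMetricGenerator G S) (hx : G.IsUniversal x) {u v : V}
    (hu : u ≠ x) (hv : v ≠ x) (huv : u ≠ v) : u ∈ S ∨ v ∈ S := by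
  by_contra! h
  have hne : s(x, u) ≠ s(x, v) := by simp [huv, hu]
  obtain ⟨w, hwS, hw⟩ := hS _ (hx hu.symm) _ (hx hv.symm) hne
  have hwu : w ≠ u := fun e => h.1 (e ▸ hwS)
  have hwv : w ≠ v := fun e => h.2 (e ▸ hwS)
  by_cases hwx : w = x
  · subst hwx
    simp [edgeDist_mk] at hw
  · rw [hx.edgeDist_spoke (by simp [hwx, hwu]), hx.edgeDist_spoke (by simp [hwx, hwv])] at hw
    exact hw rfl

lemma IsEdgeMetricGenerator.card_sub_two_le_of_isUniversal [Fintype V] {S : Finset V}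
    (hS : IsEdgeMetricGenerator G S) (hx : G.IsUniversal x) : Fintype.card V - 2 ≤ S.card := by
  classical
  have hout : ((Finset.univ \ S).erase x).card ≤ 1 := by
    refine Finset.card_le_one.mpr fun u hu v hv => ?_
    simp only [Finset.mem_erase, Finset.mem_sdiff, Finset.mem_univ, true_and] at hu hv
    by_contra huv
    exact (hS.mem_or_mem_of_isUniversal hx hu.1 hv.1 huv).elim hu.2 hv.2
  have := Finset.pred_card_le_card_erase (s := Finset.univ \ S) (a := x)
  have := Finset.card_sdiff_add_card_eq_card (Finset.subset_univ S)
  rw [Finset.card_univ] at this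
  omega

lemma SimpleGraph.IsUniversal.isEdgeMetricGenerator (hx : G.IsUniversal x) {o : V} {S : Set V}
    (hS : ∀ v, v ≠ x → v ≠ o → v ∈ S)
    (hfar : ∀ y, G.Adj o y → y ≠ x →
      ∃ k, k ≠ x ∧ k ≠ o ∧ k ≠ y ∧ ¬G.Adj k o ∧ ¬G.Adj k y) :
    IsEdgeMetricGenerator G S := by
  have hG := Connected.of_isUniversal hx
  have spoke_rim : ∀ y, G.Adj o y → y ≠ x →
      ∃ k ∈ S, edgeDist G k s(x, y) ≠ edgeDist G k s(o, y) := by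
    intro y hoy hyx
    obtain ⟨k, hkx, hko, hky, hnko, hnky⟩ := hfar y hoy hyx
    refine ⟨k, hS k hkx hko, ?_⟩
    rw [hx.edgeDist_spoke (by simp [hkx, hky]),
      hx.edgeDist_eq_two (by simp [hko, hky]) hnko hnky]
    omega
  intro e₁ he₁ e₂ he₂ hne
  by_cases hw : ∃ w, Xor (w ∈ e₁) (w ∈ e₂) ∧ w ≠ x ∧ w ≠ o
  · obtain ⟨w, hxor, hwx, hwo⟩ := hw
    refine ⟨w, hS w hwx hwo, ?_⟩
    rcases hxor with ⟨hw₁, hw₂⟩ | ⟨hw₂, hw₁⟩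
    · exact hG.edgeDist_ne_of_mem_of_notMem hw₁ hw₂
    · exact (hG.edgeDist_ne_of_mem_of_notMem hw₂ hw₁).symm
  push Not at hw
  obtain ⟨y, ⟨rfl, rfl⟩ | ⟨rfl, rfl⟩⟩ := Sym2.exists_eq_mk_of_xor_mem_imp
    (G.not_isDiag_of_mem_edgeSet he₁) (G.not_isDiag_of_mem_edgeSet he₂) hne
    (fun w hxor => or_iff_not_imp_left.mpr (hw w hxor))
  · exact spoke_rim y he₂ (G.ne_of_adj he₁).symm
  · obtain ⟨k, hkS, hk⟩ := spoke_rim y he₁ (G.ne_of_adj he₂).symm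
    exact ⟨k, hkS, hk.symm⟩

theorem SimpleGraph.IsUniversal.edim_eq [Fintype V] (hx : G.IsUniversal x) {o : V} (ho : o ≠ x)
    (hfar : ∀ y, G.Adj o y → y ≠ x →
      ∃ k, k ≠ x ∧ k ≠ o ∧ k ≠ y ∧ ¬G.Adj k o ∧ ¬G.Adj k y) :
    edim G = Fintype.card V - 2 := by
  classical
  set S := (Finset.univ.erase x).erase o
  have hcard : S.card = Fintype.card V - 2 := by
    rw [Finset.card_erase_of_mem (by simp [ho]), Finset.card_erase_of_mem (Finset.mem_univ x),
      Finset.card_univ]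
    omega
  have hgen : IsEdgeMetricGenerator G S :=
    hx.isEdgeMetricGenerator (fun v hvx hvo => by simp [S, hvx, hvo]) hfar
  refine le_antisymm (Nat.sInf_le ⟨S, hcard, hgen⟩) (le_csInf ⟨_, S, hcard, hgen⟩ ?_)
  rintro _ ⟨T, rfl, hT⟩
  exact hT.card_sub_two_le_of_isUniversal hx

end

open Fin.CommRing in
theorem SimpleGraph.cycleGraph_exists_not_adj_of_adj {n : ℕ} (hn : 5 ≤ n) {a b : Fin n}
    (hab : (cycleGraph n).Adj a b) :
    ∃ k, k ≠ a ∧ k ≠ b ∧ ¬(cycleGraph n).Adj k a ∧ ¬(cycleGraph n).Adj k b := by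
  -- the shape `_ + 2` is the one `cycleGraph_adj` is stated for
  obtain ⟨m, rfl⟩ : ∃ m, n = m + 3 + 2 := ⟨n - 5, by omega⟩
  wlog hb : b = a + 1 generalizing a b
  · have ha : a = b + 1 := by
      rw [cycleGraph_adj] at hab
      grind
    obtain ⟨k, hka, hkb, hnka, hnkb⟩ := this hab.symm ha
    exact ⟨k, hkb, hka, hnkb, hnka⟩
  subst hb
  obtain ⟨h1, h2, h3, h4⟩ : (1 : Fin (m + 3 + 2)) ≠ 0 ∧ (2 : Fin (m + 3 + 2)) ≠ 0 ∧
      (3 : Fin (m + 3 + 2)) ≠ 0 ∧ (4 : Fin (m + 3 + 2)) ≠ 0 := by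
    refine ⟨?_, ?_, ?_, ?_⟩ <;> simp (disch := omega) [Fin.ext_iff, Nat.mod_eq_of_lt]
  refine ⟨a + 3, fun h => h3 (by linear_combination h), fun h => h2 (by linear_combination h),
    ?_, ?_⟩ <;> rw [cycleGraph_adj] <;> rintro (h | h)
  · exact h2 (by linear_combination h)
  · exact h4 (by linear_combination -h)
  · exact h1 (by linear_combination h)
  · exact h3 (by linear_combination -h)

lemma wheelGraph_adj_some {n : ℕ} {i j : Fin n} :
    (wheelGraph n).Adj (some i) (some j) ↔ (cycleGraph n).Adj i j := by
  simp only [wheelGraph, fromRel_adj, ne_eq, Option.some.injEq, reduceCtorEq, false_or,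
    exists_and_left, exists_eq_left']
  exact ⟨fun h => h.2.elim id Adj.symm, fun h => ⟨h.ne, Or.inl h⟩⟩

lemma wheelGraph_isUniversal_none (n : ℕ) : (wheelGraph n).IsUniversal none := by
  rintro (_ | i) h
  · exact absurd rfl h
  · simp [wheelGraph]

lemma wheelGraph_exists_not_adj_of_adj {n : ℕ} (hn : 5 ≤ n) {a : Fin n} {y : Option (Fin n)}
    (hy : (wheelGraph n).Adj (some a) y) (hy_ne : y ≠ none) :
    ∃ k, k ≠ none ∧ k ≠ some a ∧ k ≠ y ∧
      ¬(wheelGraph n).Adj k (some a) ∧ ¬(wheelGraph n).Adj k y := by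
  obtain ⟨b, rfl⟩ := Option.ne_none_iff_exists'.mp hy_ne
  obtain ⟨k, hka, hkb, hnka, hnkb⟩ :=
    cycleGraph_exists_not_adj_of_adj hn (wheelGraph_adj_some.mp hy)
  exact ⟨some k, Option.some_ne_none k, by simpa using hka, by simpa using hkb,
    by rwa [wheelGraph_adj_some], by rwa [wheelGraph_adj_some]⟩

theorem edim_wheel (n : ℕ) (hn : 5 ≤ n) : edim (wheelGraph n) = n - 1 := by
  rw [(wheelGraph_isUniversal_none n).edim_eq (o := some ⟨0, by omega⟩) (Option.some_ne_none _)
    fun y hy hy_ne => wheelGraph_exists_not_adj_of_adj hn hy hy_ne]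
  simp
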